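/- The dephasing decay rate γ(t,s) = ω_c (1+(ω_c t)²)^{−s/2} Γ(s) sin(s·arctan(ω_c t)) is nonnegative for all t ≥ 0 whenever 0 < s ≤ 2, and for every s > 2 there exists t > 0 with γ(t,s) < 0. -/
import Mathlib


/-- The Ohmic dephasing decay rate
γ(t,s) = ω_c (1+(ω_c t)²)^(−s/2) Γ(s) sin(s·arctan(ω_c t)). -/
noncomputable def decayRate (ωc t s : ℝ) : ℝ :=
  ωc * (1 + (ωc * t) ^ 2) ^ (-(s / 2)) * Real.Gamma s *
    Real.sin (s * Real.arctan (ωc * t))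

lemma sin_neg_of_pi_lt_of_lt_two_pi {x : ℝ} (h1 : Real.pi < x) (h2 : x < 2 * Real.pi) :
    Real.sin x < 0 := by
  have : Real.sin ((x - Real.pi) + Real.pi) = -Real.sin (x - Real.pi) := Real.sin_add_pi _
  have hpos : 0 < Real.sin (x - Real.pi) :=
    Real.sin_pos_of_pos_of_lt_pi (by linarith) (by linarith)
  have hx : x = (x - Real.pi) + Real.pi := by ring
  rw [hx, Real.sin_add_pi]
  linarith

/-- γ(t,s) is nonnegative for all t ≥ 0 whenever 0 < s ≤ 2, and for every s > 2
there exists t > 0 with γ(t,s) < 0. -/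
theorem decayRate_sign (ωc : ℝ) (hωc : 0 < ωc) :
    (∀ s : ℝ, 0 < s → s ≤ 2 → ∀ t : ℝ, 0 ≤ t → 0 ≤ decayRate ωc t s) ∧
    (∀ s : ℝ, 2 < s → ∃ t : ℝ, 0 < t ∧ decayRate ωc t s < 0) := by
  constructor
  · intro s hs hs2 t ht
    have ha0 : 0 ≤ Real.arctan (ωc * t) := by simpa using Real.arctan_strictMono.monotone (by positivity : (0:ℝ) ≤ ωc * t)
    have ha1 : Real.arctan (ωc * t) < Real.pi / 2 := Real.arctan_lt_pi_div_two _
    have hsin : 0 ≤ Real.sin (s * Real.arctan (ωc * t)) := by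
      apply Real.sin_nonneg_of_nonneg_of_le_pi (by positivity)
      nlinarith
    have hΓ : 0 < Real.Gamma s := Real.Gamma_pos_of_pos hs
    have hpow : (0:ℝ) < (1 + (ωc * t) ^ 2) ^ (-(s / 2)) :=
      Real.rpow_pos_of_pos (by positivity) _
    unfold decayRate
    positivity
  · intro s hs
    have hpi := Real.pi_pos
    set m := min (2 * Real.pi / s) (Real.pi / 2) with hm
    have hs0 : (0:ℝ) < s := by linarith
    have h1 : Real.pi / s < 2 * Real.pi / s := by
      rw [div_lt_div_iff₀ hs0 hs0]; nlinarith
    have h2 : Real.pi / s < Real.pi / 2 := by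
      rw [div_lt_div_iff₀ hs0 (by norm_num : (0:ℝ) < 2)]; nlinarith
    have hlm : Real.pi / s < m := lt_min h1 h2
    set a := (Real.pi / s + m) / 2 with ha
    have haL : Real.pi / s < a := by rw [ha]; linarith
    have haU : a < m := by rw [ha]; linarith
    have ha0 : 0 < a := lt_trans (by positivity) haL
    have haHalf : a < Real.pi / 2 := lt_of_lt_of_le haU (min_le_right _ _)
    have htan : 0 < Real.tan a := Real.tan_pos_of_pos_of_lt_pi_div_two ha0 haHalf
    refine ⟨Real.tan a / ωc, by positivity, ?_⟩
    have harct : Real.arctan (ωc * (Real.tan a / ωc)) = a := by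
      rw [mul_div_cancel₀ _ (ne_of_gt hωc)]
      exact Real.arctan_tan (by linarith) haHalf
    have hsin : Real.sin (s * a) < 0 := by
      apply sin_neg_of_pi_lt_of_lt_two_pi
      · calc Real.pi = s * (Real.pi / s) := by field_simp
          _ < s * a := by exact mul_lt_mul_of_pos_left haL hs0
      · have : a < 2 * Real.pi / s := lt_of_lt_of_le haU (min_le_left _ _)
        calc s * a < s * (2 * Real.pi / s) := mul_lt_mul_of_pos_left this hs0
          _ = 2 * Real.pi := by field_simp
    have hΓ : 0 < Real.Gamma s := Real.Gamma_pos_of_pos hs0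
    have hpow : (0:ℝ) < (1 + (ωc * (Real.tan a / ωc)) ^ 2) ^ (-(s / 2)) :=
      Real.rpow_pos_of_pos (by positivity) _
    unfold decayRate
    rw [harct]
    have h := mul_pos (mul_pos hωc hpow) hΓ
    exact mul_neg_of_pos_of_neg h hsin
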